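/- Let (Ω, 𝒜, P) be a probability space, let n ≥ 1, let K ≥ 2, and distinguish an index i⋆ ∈ {1,…,K}. For each i and s ∈ {1,…,n} let R̄_{i,s} : Ω → [0,1] be random variables, let (R⋆_t)_{t=1}^n be random variables with values in [0,1], and let T_1(n),…,T_K(n) : Ω → {0,1,…,n} be random variables with Σ_{i=1}^K T_i(n) = n pointwise. Assume that pointwise T_{i⋆}(n)·R̄_{i⋆,T_{i⋆}(n)} = Σ_{t=1}^{T_{i⋆}(n)} R⋆_t, define R̄_n = Σ_{i=1}^K (T_i(n)/n)·R̄_{i,T_i(n)}, and let μ⋆_n = (1/n)·Σ_{t=1}^n E[R⋆_t] and μ⋆ ∈ ℝ. Then |E[R̄_n] − μ⋆| ≤ |μ⋆ − μ⋆_n| + (2/n)·Σ_{i ≠ i⋆} E[T_i(n)]. -/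

import Mathlib

open MeasureTheory Finset

/-
Pathwise, `n · R̄_n − Σ_{t ≤ n} R⋆_t` is the reward collected on the suboptimal arms minus the
optimal rewards `R⋆_t` for `T_{i⋆}(n) < t ≤ n`. Both lie in `[0, n − T_{i⋆}(n)]`, and
`n − T_{i⋆}(n) = Σ_{i ≠ i⋆} T_i(n)`, which bounds the difference. Taking expectations and the
triangle inequality through `μ⋆_n` give the claim.
-/

theorem le_of_sum_univ_eq {ι : Type*} [Fintype ι] {T : ι → ℕ} {n : ℕ} (hT : ∑ i, T i = n)
    (i : ι) : T i ≤ n :=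
  hT ▸ single_le_sum (fun _ _ ↦ Nat.zero_le _) (mem_univ i)

theorem sum_Icc_one_eq_add_sum_Ioc {M : Type*} [AddCommMonoid M] (x : ℕ → M) {m n : ℕ}
    (h : m ≤ n) : ∑ t ∈ Icc 1 n, x t = ∑ t ∈ Icc 1 m, x t + ∑ t ∈ Ioc m n, x t := by
  have hIcc : ∀ k, Icc 1 k = Ioc 0 k := Icc_add_one_left_eq_Ioc 0
  rw [hIcc, hIcc, sum_Ioc_consecutive _ (Nat.zero_le m) h]

theorem natCast_mul_mem_Icc {r : ℕ → ℝ} {s n : ℕ}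
    (hr : ∀ s, 1 ≤ s → s ≤ n → r s ∈ Set.Icc (0 : ℝ) 1) (hs : s ≤ n) :
    0 ≤ s * r s ∧ s * r s ≤ s := by
  rcases s.eq_zero_or_pos with rfl | hpos
  · simp
  have hrs := hr s hpos hs
  exact ⟨mul_nonneg s.cast_nonneg hrs.1, mul_le_of_le_one_right s.cast_nonneg hrs.2⟩

theorem abs_sum_sub_sum_Icc_le_sum_erase {ι : Type*} [Fintype ι] [DecidableEq ι]
    (i₀ : ι) (n : ℕ) (T : ι → ℕ) (y : ι → ℝ) (x : ℕ → ℝ)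
    (hT : ∑ i, T i = n) (hy : ∀ i ≠ i₀, 0 ≤ y i ∧ y i ≤ T i)
    (hx : ∀ t ∈ Icc 1 n, x t ∈ Set.Icc (0 : ℝ) 1)
    (hy₀ : y i₀ = ∑ t ∈ Icc 1 (T i₀), x t) :
    |∑ i, y i - ∑ t ∈ Icc 1 n, x t| ≤ ∑ i ∈ univ.erase i₀, (T i : ℝ) := by
  have hτ : T i₀ ≤ n := le_of_sum_univ_eq hT i₀
  have hrest : ∑ i ∈ univ.erase i₀, (T i : ℝ) = n - T i₀ := by
    rw [← hT, Nat.cast_sum, ← add_sum_erase _ _ (mem_univ i₀)]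
    ring
  have hx' : ∀ t ∈ Ioc (T i₀) n, x t ∈ Set.Icc (0 : ℝ) 1 := fun t ht ↦
    hx t (mem_Icc.2 ⟨Nat.zero_lt_of_lt (mem_Ioc.1 ht).1, (mem_Ioc.1 ht).2⟩)
  have htail_nonneg : 0 ≤ ∑ t ∈ Ioc (T i₀) n, x t := sum_nonneg fun t ht ↦ (hx' t ht).1
  have htail_le : ∑ t ∈ Ioc (T i₀) n, x t ≤ n - T i₀ := by
    calc ∑ t ∈ Ioc (T i₀) n, x t ≤ #(Ioc (T i₀) n) • (1 : ℝ) :=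
          sum_le_card_nsmul _ _ _ fun t ht ↦ (hx' t ht).2
      _ = n - T i₀ := by simp [Nat.cast_sub hτ]
  have hothers_nonneg : 0 ≤ ∑ i ∈ univ.erase i₀, y i :=
    sum_nonneg fun i hi ↦ (hy i (ne_of_mem_erase hi)).1
  have hothers_le : ∑ i ∈ univ.erase i₀, y i ≤ ∑ i ∈ univ.erase i₀, (T i : ℝ) :=
    sum_le_sum fun i hi ↦ (hy i (ne_of_mem_erase hi)).2
  rw [← add_sum_erase _ _ (mem_univ i₀), sum_Icc_one_eq_add_sum_Ioc x hτ, hy₀,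
    add_sub_add_left_eq_sub]
  exact abs_le.2 ⟨by linarith, by linarith⟩

theorem Measurable.apply_index {Ω α β : Type*} [MeasurableSpace Ω] [MeasurableSpace α]
    [MeasurableSpace β] [Countable α] [MeasurableSingletonClass α] {f : α → Ω → β}
    (hf : ∀ a, Measurable (f a)) {τ : Ω → α} (hτ : Measurable τ) :
    Measurable fun ω ↦ f (τ ω) ω :=
  (measurable_from_prod_countable_right (f := fun p : α × Ω ↦ f p.1 p.2) hf).comp
    (hτ.prodMk measurable_id)

theorem abs_integral_sub_integral_le {Ω : Type*} [MeasurableSpace Ω] {P : Measure Ω}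
    {f g h : Ω → ℝ} (hf : Integrable f P) (hg : Integrable g P) (hh : Integrable h P)
    (hfg : ∀ ω, |f ω - g ω| ≤ h ω) : |∫ ω, f ω ∂P - ∫ ω, g ω ∂P| ≤ ∫ ω, h ω ∂P := by
  rw [← integral_sub hf hg]
  exact abs_integral_le_integral_abs.trans (integral_mono (hf.sub hg).abs hh hfg)

theorem abs_integral_sum_sub_sum_integral_le {Ω ι : Type*} [MeasurableSpace Ω]
    {P : Measure Ω} [IsFiniteMeasure P] [Fintype ι] [DecidableEq ι]
    (i₀ : ι) (n : ℕ) {T : ι → Ω → ℕ} {y : ι → Ω → ℝ} {x : ℕ → Ω → ℝ}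
    (hTmeas : ∀ i, Measurable (T i)) (hymeas : ∀ i, Measurable (y i))
    (hxmeas : ∀ t, Measurable (x t))
    (hT : ∀ ω, ∑ i, T i ω = n) (hy : ∀ i ω, 0 ≤ y i ω ∧ y i ω ≤ T i ω)
    (hx : ∀ t ∈ Icc 1 n, ∀ ω, x t ω ∈ Set.Icc (0 : ℝ) 1)
    (hy₀ : ∀ ω, y i₀ ω = ∑ t ∈ Icc 1 (T i₀ ω), x t ω) :
    |∫ ω, ∑ i, y i ω ∂P - ∑ t ∈ Icc 1 n, ∫ ω, x t ω ∂P|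
      ≤ ∑ i ∈ univ.erase i₀, ∫ ω, (T i ω : ℝ) ∂P := by
  have hT_le : ∀ i ω, (T i ω : ℝ) ≤ n := fun i ω ↦ by
    exact_mod_cast le_of_sum_univ_eq (hT ω) i
  have hT_int : ∀ i, Integrable (fun ω ↦ (T i ω : ℝ)) P := fun i ↦
    .of_bound (measurable_from_top.comp (hTmeas i)).aestronglyMeasurable n
      (ae_of_all _ fun ω ↦ by rw [Real.norm_natCast]; exact hT_le i ω)
  have hy_int : ∀ i, Integrable (y i) P := fun i ↦
    .of_bound (hymeas i).aestronglyMeasurable n (ae_of_all _ fun ω ↦ by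
      rw [Real.norm_of_nonneg (hy i ω).1]; exact (hy i ω).2.trans (hT_le i ω))
  have hx_int : ∀ t ∈ Icc 1 n, Integrable (x t) P := fun t ht ↦
    .of_bound (hxmeas t).aestronglyMeasurable 1 (ae_of_all _ fun ω ↦ by
      rw [Real.norm_of_nonneg (hx t ht ω).1]; exact (hx t ht ω).2)
  rw [← integral_finsetSum _ hx_int, ← integral_finsetSum _ fun i _ ↦ hT_int i]
  exact abs_integral_sub_integral_le (integrable_finsetSum _ fun i _ ↦ hy_int i)
    (integrable_finsetSum _ hx_int) (integrable_finsetSum _ fun i _ ↦ hT_int i)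
    fun ω ↦ abs_sum_sub_sum_Icc_le_sum_erase i₀ n (T · ω) (y · ω) (x · ω) (hT ω)
      (fun i _ ↦ hy i ω) (fun t ht ↦ hx t ht ω) (hy₀ ω)

theorem stmt_5_general {Ω : Type*} [MeasurableSpace Ω] (P : Measure Ω) [IsProbabilityMeasure P]
    (n K : ℕ) (istar : Fin K)
    (Rbar : Fin K → ℕ → Ω → ℝ)
    (hRbarMeas : ∀ i s, Measurable (Rbar i s))
    (hRbarMem : ∀ i s ω, 1 ≤ s → s ≤ n → Rbar i s ω ∈ Set.Icc (0 : ℝ) 1)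
    (Rstar : ℕ → Ω → ℝ)
    (hRstarMeas : ∀ t, Measurable (Rstar t))
    (hRstarMem : ∀ t ω, 1 ≤ t → t ≤ n → Rstar t ω ∈ Set.Icc (0 : ℝ) 1)
    (T : Fin K → Ω → ℕ)
    (hTmeas : ∀ i, Measurable (T i))
    (hTsum : ∀ ω, ∑ i, T i ω = n)
    (hkey : ∀ ω, (T istar ω : ℝ) * Rbar istar (T istar ω) ω
      = ∑ t ∈ Finset.Icc 1 (T istar ω), Rstar t ω)
    (Rbar_n : Ω → ℝ)
    (hRbar_n : ∀ ω, Rbar_n ω = ∑ i, ((T i ω : ℝ) / (n : ℝ)) * Rbar i (T i ω) ω)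
    (μstar_n μstar : ℝ)
    (hμstar_n : μstar_n = (1 / (n : ℝ)) * ∑ t ∈ Finset.Icc 1 n, ∫ ω, Rstar t ω ∂P) :
    |(∫ ω, Rbar_n ω ∂P) - μstar| ≤
      |μstar - μstar_n| +
        (2 / (n : ℝ)) * ∑ i ∈ Finset.univ.erase istar, ∫ ω, (T i ω : ℝ) ∂P := by
  set y : Fin K → Ω → ℝ := fun i ω ↦ (T i ω : ℝ) * Rbar i (T i ω) ω
  have hgap := abs_integral_sum_sub_sum_integral_le (P := P) (y := y) istar n hTmeas
    (fun i ↦ (measurable_from_top.comp (hTmeas i)).mul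
      (Measurable.apply_index (hRbarMeas i) (hTmeas i)))
    hRstarMeas hTsum
    (fun i ω ↦ natCast_mul_mem_Icc (hRbarMem i · ω) (le_of_sum_univ_eq (hTsum ω) i))
    (fun t ht ω ↦ hRstarMem t ω (mem_Icc.1 ht).1 (mem_Icc.1 ht).2) hkey
  have hRbar_n_eq : ∫ ω, Rbar_n ω ∂P = (1 / (n : ℝ)) * ∫ ω, ∑ i, y i ω ∂P := by
    rw [← integral_const_mul]
    congr 1 with ω
    rw [hRbar_n ω, mul_sum]
    exact sum_congr rfl fun i _ ↦ by ring
  calc |(∫ ω, Rbar_n ω ∂P) - μstar|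
      ≤ |(∫ ω, Rbar_n ω ∂P) - μstar_n| + |μstar - μstar_n| := by
        simpa only [abs_sub_comm μstar_n μstar] using abs_sub_le _ μstar_n μstar
    _ ≤ (1 / (n : ℝ)) * ∑ i ∈ univ.erase istar, ∫ ω, (T i ω : ℝ) ∂P + |μstar - μstar_n| := by
        rw [hRbar_n_eq, hμstar_n, ← mul_sub, abs_mul, abs_of_nonneg (by positivity)]
        gcongr
    _ ≤ _ := by
        rw [add_comm]
        gcongr
        norm_num

/-- Lemma 5 in explicit form: with `R̄_n = Σ_i (T_i(n)/n)·R̄_{i,T_i(n)}` the overall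
average reward, `μ⋆_n = (1/n)·Σ_{t=1}^n E[R⋆_t]`, and
`T_{i⋆}(n)·R̄_{i⋆,T_{i⋆}(n)} = Σ_{t=1}^{T_{i⋆}(n)} R⋆_t` pointwise,
`|E[R̄_n] − μ⋆| ≤ |μ⋆ − μ⋆_n| + (2/n)·Σ_{i ≠ i⋆} E[T_i(n)]`. -/
theorem stmt_5 {Ω : Type*} [MeasurableSpace Ω] (P : Measure Ω) [IsProbabilityMeasure P]
    (n K : ℕ) (hn : 1 ≤ n) (hK : 2 ≤ K) (istar : Fin K)
    (Rbar : Fin K → ℕ → Ω → ℝ)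
    (hRbarMeas : ∀ i s, Measurable (Rbar i s))
    (hRbarMem : ∀ i s ω, 1 ≤ s → s ≤ n → Rbar i s ω ∈ Set.Icc (0 : ℝ) 1)
    (Rstar : ℕ → Ω → ℝ)
    (hRstarMeas : ∀ t, Measurable (Rstar t))
    (hRstarMem : ∀ t ω, 1 ≤ t → t ≤ n → Rstar t ω ∈ Set.Icc (0 : ℝ) 1)
    (T : Fin K → Ω → ℕ)
    (hTmeas : ∀ i, Measurable (T i))
    (hTle : ∀ i ω, T i ω ≤ n)
    (hTsum : ∀ ω, ∑ i, T i ω = n)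
    (hkey : ∀ ω, (T istar ω : ℝ) * Rbar istar (T istar ω) ω
      = ∑ t ∈ Finset.Icc 1 (T istar ω), Rstar t ω)
    (Rbar_n : Ω → ℝ)
    (hRbar_n : ∀ ω, Rbar_n ω = ∑ i, ((T i ω : ℝ) / (n : ℝ)) * Rbar i (T i ω) ω)
    (μstar_n μstar : ℝ)
    (hμstar_n : μstar_n = (1 / (n : ℝ)) * ∑ t ∈ Finset.Icc 1 n, ∫ ω, Rstar t ω ∂P) :
    |(∫ ω, Rbar_n ω ∂P) - μstar| ≤
      |μstar - μstar_n| +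
        (2 / (n : ℝ)) * ∑ i ∈ Finset.univ.erase istar, ∫ ω, (T i ω : ℝ) ∂P :=
  stmt_5_general P n K istar Rbar hRbarMeas hRbarMem Rstar hRstarMeas hRstarMem T hTmeas hTsum hkey
    Rbar_n hRbar_n μstar_n μstar hμstar_n
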